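/- Fix u ∈ (0,1). Let U ~ Bernoulli(u), A ~ Geometric(1-u), B ~ Geometric(u) (geometric on {1,2,...} with P(A=k) = u^{k-1}(1-u)), and set K_u = U·A + (1-U)·B. Then E[∑_{k > K_u} 2/(k(k-1))] = 2·H(u), where H(u) = -(1-u)log(1-u) - u log u. -/

import Mathlib

open MeasureTheory ProbabilityTheory

/-- Shift equivalence `ℕ ≃ {k // n < k}`. -/
def shiftEquiv (n : ℕ) : ℕ ≃ {k : ℕ // n < k} where
  toFun j := ⟨n + 1 + j, by omega⟩
  invFun k := k.1 - (n + 1)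
  left_inv j := by show n + 1 + j - (n + 1) = j; omega
  right_inv k := Subtype.ext (by show n + 1 + (k.1 - (n + 1)) = k.1; have := k.2; omega)

lemma tail_hasSum (n : ℕ) (hn : 1 ≤ n) :
    HasSum (fun k : {k : ℕ // n < k} => 2 / ((k : ℝ) * ((k : ℝ) - 1))) (2 / (n : ℝ)) := by
  rw [← (shiftEquiv n).hasSum_iff]
  have hterm : ∀ j : ℕ,
      ((fun k : {k : ℕ // n < k} => 2 / ((k : ℝ) * ((k : ℝ) - 1))) ∘ (shiftEquiv n)) j
        = 2 / ((n : ℝ) + j) - 2 / ((n : ℝ) + (j + 1)) := by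
    intro j
    have hn' : (1 : ℝ) ≤ (n : ℝ) := Nat.one_le_cast.2 hn
    have hj : (0 : ℝ) ≤ (j : ℝ) := Nat.cast_nonneg j
    have ha : ((n : ℝ) + j) ≠ 0 := by positivity
    have ha1 : ((n : ℝ) + (j + 1)) ≠ 0 := by positivity
    show 2 / (((n + 1 + j : ℕ) : ℝ) * (((n + 1 + j : ℕ) : ℝ) - 1)) = _
    push_cast
    rw [show ((n:ℝ) + 1 + j) * ((n:ℝ) + 1 + j - 1) = ((n:ℝ) + j) * ((n:ℝ) + (j + 1)) from by ring]
    rw [div_sub_div _ _ ha ha1, div_eq_div_iff (mul_ne_zero ha ha1) (mul_ne_zero ha ha1)]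
    ring
  have hnonneg : ∀ j : ℕ,
      0 ≤ ((fun k : {k : ℕ // n < k} => 2 / ((k : ℝ) * ((k : ℝ) - 1))) ∘ (shiftEquiv n)) j := by
    intro j
    show 0 ≤ 2 / (((n + 1 + j : ℕ) : ℝ) * (((n + 1 + j : ℕ) : ℝ) - 1))
    push_cast
    have hn' : (1 : ℝ) ≤ (n : ℝ) := Nat.one_le_cast.2 hn
    have hj : (0 : ℝ) ≤ (j : ℝ) := Nat.cast_nonneg j
    have h : (0:ℝ) ≤ ((n : ℝ) + 1 + j) * ((n : ℝ) + 1 + j - 1) := by nlinarith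
    positivity
  rw [hasSum_iff_tendsto_nat_of_nonneg hnonneg]
  have hsum : ∀ N : ℕ,
      (∑ i ∈ Finset.range N,
        ((fun k : {k : ℕ // n < k} => 2 / ((k : ℝ) * ((k : ℝ) - 1))) ∘ (shiftEquiv n)) i)
        = 2 / (n : ℝ) - 2 / ((n : ℝ) + N) := by
    intro N
    have h := Finset.sum_range_sub' (f := fun j : ℕ => 2 / ((n : ℝ) + j)) N
    simp only [Nat.cast_zero, add_zero] at h
    rw [← h]
    apply Finset.sum_congr rfl
    intro i _
    rw [hterm i]
    push_cast
    ring_nf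
  simp only [hsum]
  have htop : Filter.Tendsto (fun N : ℕ => (n : ℝ) + N) Filter.atTop Filter.atTop :=
    Filter.tendsto_atTop_add_const_left _ _ tendsto_natCast_atTop_atTop
  have h0 : Filter.Tendsto (fun N : ℕ => 2 / ((n : ℝ) + N)) Filter.atTop (nhds 0) :=
    Filter.Tendsto.div_atTop tendsto_const_nhds htop
  simpa using (tendsto_const_nhds (x := 2 / (n : ℝ))).sub h0

lemma tail_hasSum0 :
    HasSum (fun k : {k : ℕ // 0 < k} => 2 / ((k : ℝ) * ((k : ℝ) - 1))) 2 := by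
  rw [← (shiftEquiv 0).hasSum_iff]
  set g : ℕ → ℝ := fun j => if j = 0 then 2 else 2 / (j : ℝ) with hg
  have hterm : ∀ j : ℕ,
      ((fun k : {k : ℕ // 0 < k} => 2 / ((k : ℝ) * ((k : ℝ) - 1))) ∘ (shiftEquiv 0)) j
        = g j - g (j + 1) := by
    intro j
    show 2 / (((0 + 1 + j : ℕ) : ℝ) * (((0 + 1 + j : ℕ) : ℝ) - 1)) = g j - g (j + 1)
    match j with
    | 0 => norm_num [hg]
    | m + 1 =>
      have hm1 : ((m : ℝ) + 1) ≠ 0 := by positivity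
      have hm2 : ((m : ℝ) + 2) ≠ 0 := by positivity
      have e1 : g (m + 1) = 2 / ((m : ℝ) + 1) := by
        show (if (m + 1 : ℕ) = 0 then (2:ℝ) else 2 / ((m + 1 : ℕ) : ℝ)) = _
        rw [if_neg (by omega)]
        push_cast
        ring
      have e2 : g (m + 1 + 1) = 2 / ((m : ℝ) + 2) := by
        show (if (m + 1 + 1 : ℕ) = 0 then (2:ℝ) else 2 / ((m + 1 + 1 : ℕ) : ℝ)) = _
        rw [if_neg (by omega)]
        push_cast
        ring
      rw [e1, e2]
      push_cast
      rw [show (1 + ((m:ℝ) + 1)) * (1 + ((m:ℝ) + 1) - 1) = ((m:ℝ) + 1) * ((m:ℝ) + 2) from by ring]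
      rw [div_sub_div _ _ hm1 hm2,
        div_eq_div_iff (mul_ne_zero hm1 hm2) (mul_ne_zero hm1 hm2)]
      ring
  have hnonneg : ∀ j : ℕ,
      0 ≤ ((fun k : {k : ℕ // 0 < k} => 2 / ((k : ℝ) * ((k : ℝ) - 1))) ∘ (shiftEquiv 0)) j := by
    intro j
    show 0 ≤ 2 / (((0 + 1 + j : ℕ) : ℝ) * (((0 + 1 + j : ℕ) : ℝ) - 1))
    have h1 : (1:ℝ) ≤ ((0 + 1 + j : ℕ) : ℝ) := by exact_mod_cast (by omega : 1 ≤ 0 + 1 + j)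
    exact div_nonneg (by norm_num) (by nlinarith)
  rw [hasSum_iff_tendsto_nat_of_nonneg hnonneg]
  have hsum : ∀ N : ℕ,
      (∑ i ∈ Finset.range N,
        ((fun k : {k : ℕ // 0 < k} => 2 / ((k : ℝ) * ((k : ℝ) - 1))) ∘ (shiftEquiv 0)) i)
        = 2 - g N := by
    intro N
    have h := Finset.sum_range_sub' (f := g) N
    have hg0 : g 0 = 2 := by simp [hg]
    rw [hg0] at h
    rw [← h]
    exact Finset.sum_congr rfl fun i _ => hterm i
  simp only [hsum]
  have h2 : Filter.Tendsto (fun N : ℕ => 2 / (N : ℝ)) Filter.atTop (nhds 0) :=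
    Filter.Tendsto.div_atTop tendsto_const_nhds tendsto_natCast_atTop_atTop
  have heq : (fun N : ℕ => 2 / (N : ℝ)) =ᶠ[Filter.atTop] g := by
    filter_upwards [Filter.eventually_ge_atTop 1] with N hN
    have : N ≠ 0 := by omega
    simp [hg, this]
  have h0 : Filter.Tendsto g Filter.atTop (nhds 0) := h2.congr' heq
  simpa using (tendsto_const_nhds (x := (2 : ℝ))).sub h0

/-- Let `U ~ Bernoulli(u)`, `A ~ Geometric(1-u)`, `B ~ Geometric(u)` (geometric on
`{1,2,...}`), with `U` independent of `(A,B)`, and set `K_u = U·A + (1-U)·B`. Then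
`E[∑_{k > K_u} 2/(k(k-1))] = 2·H(u)` with `H(u) = -(1-u)log(1-u) - u log u`. -/
theorem consensus_entropy_identity
    {Ω : Type*} [MeasurableSpace Ω] (μ : Measure Ω) [IsProbabilityMeasure μ]
    (u : ℝ) (hu : u ∈ Set.Ioo (0:ℝ) 1)
    (U A B : Ω → ℕ) (hU : Measurable U) (hA : Measurable A) (hB : Measurable B)
    (hU01 : ∀ ω, U ω = 0 ∨ U ω = 1)
    (hUlaw : μ {ω | U ω = 1} = ENNReal.ofReal u)
    (hAlaw : ∀ k : ℕ, 1 ≤ k → μ {ω | A ω = k} = ENNReal.ofReal (u ^ (k - 1) * (1 - u)))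
    (hBlaw : ∀ k : ℕ, 1 ≤ k → μ {ω | B ω = k} = ENNReal.ofReal ((1 - u) ^ (k - 1) * u))
    (hA0 : μ {ω | A ω = 0} = 0) (hB0 : μ {ω | B ω = 0} = 0)
    (hindep : IndepFun U (fun ω => (A ω, B ω)) μ)
    (K : Ω → ℕ) (hK : ∀ ω, K ω = U ω * A ω + (1 - U ω) * B ω) :
    ∫ ω, (∑' k : {k : ℕ // K ω < k}, 2 / ((k : ℝ) * ((k : ℝ) - 1))) ∂μ =
      2 * (-(1 - u) * Real.log (1 - u) - u * Real.log u) := by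
  obtain ⟨hu0, hu1⟩ := hu
  set f : ℕ → ℝ := fun n => ∑' k : {k : ℕ // n < k}, 2 / ((k : ℝ) * ((k : ℝ) - 1)) with hf_def
  have hf : ∀ n : ℕ, 1 ≤ n → f n = 2 / (n : ℝ) := fun n hn => (tail_hasSum n hn).tsum_eq
  have hf0 : f 0 = 2 := tail_hasSum0.tsum_eq
  have hf_nonneg : ∀ n, 0 ≤ f n := by
    intro n
    match n with
    | 0 => rw [hf0]; norm_num
    | m + 1 => rw [hf (m+1) (by omega)]; positivity
  have hf_le : ∀ n, f n ≤ 2 := by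
    intro n
    match n with
    | 0 => rw [hf0]
    | m + 1 =>
      rw [hf (m+1) (by omega)]
      rw [div_le_iff₀ (by positivity)]
      have : (1 : ℝ) ≤ ((m : ℝ) + 1) := by
        have := Nat.cast_nonneg (α := ℝ) m; linarith
      push_cast
      nlinarith
  -- measurability of K
  have hKmeas : Measurable K := by
    rw [funext hK]
    exact ((hU.mul hA).add ((measurable_const.sub hU).mul hB))
  -- sets are measurable
  have hmU1 : MeasurableSet {ω | U ω = 1} := hU (measurableSet_singleton 1)
  have hmU0 : MeasurableSet {ω | U ω = 0} := hU (measurableSet_singleton 0)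
  have hmA : ∀ n : ℕ, MeasurableSet {ω | A ω = n} := fun n => hA (measurableSet_singleton n)
  have hmB : ∀ n : ℕ, MeasurableSet {ω | B ω = n} := fun n => hB (measurableSet_singleton n)
  -- decomposition of {K = n}
  have hset : ∀ n : ℕ, {ω | K ω = n}
      = ({ω | U ω = 1} ∩ {ω | A ω = n}) ∪ ({ω | U ω = 0} ∩ {ω | B ω = n}) := by
    intro n
    ext ω
    rcases hU01 ω with h | h <;> simp [hK ω, h]
  have hdisj : ∀ n : ℕ, Disjoint ({ω | U ω = 1} ∩ {ω | A ω = n})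
      (({ω | U ω = 0} ∩ {ω | B ω = n})) := by
    intro n
    apply Set.disjoint_left.2
    rintro ω ⟨h1, -⟩ ⟨h0, -⟩
    simp only [Set.mem_setOf_eq] at h1 h0
    omega
  -- measure of U = 0
  have hU0law : μ {ω | U ω = 0} = ENNReal.ofReal (1 - u) := by
    have hc : {ω | U ω = 0} = {ω | U ω = 1}ᶜ := by
      ext ω; rcases hU01 ω with h | h <;> simp [h]
    rw [hc, measure_compl hmU1 (measure_ne_top μ _), hUlaw, measure_univ]
    rw [ENNReal.ofReal_sub 1 (le_of_lt hu0), ENNReal.ofReal_one]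
  -- independence applied
  have hindA : ∀ n : ℕ, μ ({ω | U ω = 1} ∩ {ω | A ω = n}) = μ {ω | U ω = 1} * μ {ω | A ω = n} := by
    intro n
    have h := hindep.measure_inter_preimage_eq_mul {1} ({n} ×ˢ (Set.univ : Set ℕ))
      (measurableSet_singleton 1) ((measurableSet_singleton n).prod MeasurableSet.univ)
    have h1 : U ⁻¹' {1} = {ω | U ω = 1} := rfl
    have h2 : (fun ω => (A ω, B ω)) ⁻¹' ({n} ×ˢ (Set.univ : Set ℕ)) = {ω | A ω = n} := by
      ext ω; simp
    rwa [h1, h2] at h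
  have hindB : ∀ n : ℕ, μ ({ω | U ω = 0} ∩ {ω | B ω = n}) = μ {ω | U ω = 0} * μ {ω | B ω = n} := by
    intro n
    have h := hindep.measure_inter_preimage_eq_mul {0} ((Set.univ : Set ℕ) ×ˢ {n})
      (measurableSet_singleton 0) (MeasurableSet.univ.prod (measurableSet_singleton n))
    have h1 : U ⁻¹' {0} = {ω | U ω = 0} := rfl
    have h2 : (fun ω => (A ω, B ω)) ⁻¹' ((Set.univ : Set ℕ) ×ˢ {n}) = {ω | B ω = n} := by
      ext ω; simp
    rwa [h1, h2] at h
  -- law of K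
  have h1u : (0:ℝ) ≤ 1 - u := by linarith
  have hKlaw : ∀ n : ℕ, 1 ≤ n →
      μ {ω | K ω = n} = ENNReal.ofReal (u ^ n * (1 - u) + (1 - u) ^ n * u) := by
    intro n hn
    rw [hset n, measure_union (hdisj n) (hmU0.inter (hmB n)), hindA n, hindB n,
      hUlaw, hU0law, hAlaw n hn, hBlaw n hn]
    rw [← ENNReal.ofReal_mul (le_of_lt hu0), ← ENNReal.ofReal_mul h1u]
    rw [← ENNReal.ofReal_add
      (mul_nonneg hu0.le (mul_nonneg (pow_nonneg hu0.le _) h1u))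
      (mul_nonneg h1u (mul_nonneg (pow_nonneg h1u _) hu0.le))]
    congr 1
    have hpow : u * (u ^ (n - 1) * (1 - u)) = u ^ n * (1 - u) := by
      rw [← mul_assoc, ← pow_succ']
      congr 2
      omega
    have hpow' : (1 - u) * ((1 - u) ^ (n - 1) * u) = (1 - u) ^ n * u := by
      rw [← mul_assoc, ← pow_succ']
      congr 2
      omega
    rw [hpow, hpow']
  have hK0 : μ {ω | K ω = 0} = 0 := by
    rw [hset 0]
    refine le_antisymm ?_ zero_le
    calc μ (({ω | U ω = 1} ∩ {ω | A ω = 0}) ∪ ({ω | U ω = 0} ∩ {ω | B ω = 0}))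
        ≤ μ ({ω | U ω = 1} ∩ {ω | A ω = 0}) + μ ({ω | U ω = 0} ∩ {ω | B ω = 0}) :=
          measure_union_le _ _
      _ ≤ μ {ω | A ω = 0} + μ {ω | B ω = 0} := by
          gcongr <;> exact Set.inter_subset_right
      _ = 0 := by rw [hA0, hB0, add_zero]
  -- rewrite integral via pushforward
  have hfmeas : Measurable f := measurable_from_top
  have hint : Integrable f (μ.map K) := by
    have : IsProbabilityMeasure (μ.map K) := Measure.isProbabilityMeasure_map hKmeas.aemeasurable
    refine (integrable_const (2 : ℝ)).mono' hfmeas.aestronglyMeasurable ?_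
    filter_upwards with n
    rw [Real.norm_of_nonneg (hf_nonneg n)]
    exact hf_le n
  have hmap : ∫ ω, f (K ω) ∂μ = ∫ n, f n ∂(μ.map K) :=
    (integral_map hKmeas.aemeasurable hfmeas.aestronglyMeasurable).symm
  have hνn : ∀ n : ℕ, (μ.map K) {n} = μ {ω | K ω = n} := by
    intro n
    rw [Measure.map_apply hKmeas (measurableSet_singleton n)]
    rfl
  -- the series value
  set L : ℝ := 2 * (-(1 - u) * Real.log (1 - u) - u * Real.log u) with hL
  have habs1 : |u| < 1 := by rw [abs_of_pos hu0]; exact hu1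
  have habs2 : |1 - u| < 1 := by rw [abs_of_pos (by linarith)]; linarith
  have hs1 : HasSum (fun n : ℕ => (2 * (1 - u)) * (u ^ (n + 1) / ((n : ℝ) + 1)))
      ((2 * (1 - u)) * (-Real.log (1 - u))) := by
    have h := Real.hasSum_pow_div_log_of_abs_lt_one habs1
    have h' := h.mul_left (2 * (1 - u))
    convert h' using 2 <;> push_cast <;> ring
  have hs2 : HasSum (fun n : ℕ => (2 * u) * ((1 - u) ^ (n + 1) / ((n : ℝ) + 1)))
      ((2 * u) * (-Real.log u)) := by
    have h := Real.hasSum_pow_div_log_of_abs_lt_one habs2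
    simp only [sub_sub_cancel] at h
    have h' := h.mul_left (2 * u)
    convert h' using 2 <;> push_cast <;> ring
  set s : ℕ → ℝ := fun n => (u ^ n * (1 - u) + (1 - u) ^ n * u) * (2 / (n : ℝ)) with hs_def
  have hsSum : HasSum s L := by
    have hshift : HasSum (fun n : ℕ => s (n + 1)) L := by
      have hadd := hs1.add hs2
      convert hadd using 1
      · funext n
        show (u ^ (n+1) * (1 - u) + (1 - u) ^ (n+1) * u) * (2 / ((n+1 : ℕ) : ℝ)) = _
        have hn1 : ((n : ℝ) + 1) ≠ 0 := by positivity
        push_cast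
        field_simp
      · rw [hL]; ring
    have h0 : s 0 = 0 := by simp [hs_def]
    have h' := (hasSum_nat_add_iff (f := s) 1).1 hshift
    rwa [Finset.sum_range_one, h0, add_zero] at h'
  -- put everything together
  show ∫ ω, f (K ω) ∂μ = L
  rw [hmap, integral_countable' hint]
  have hcongr : (fun n : ℕ => ((μ.map K) {n}).toReal • f n) = s := by
    funext n
    match n with
    | 0 =>
      rw [hνn 0, hK0]
      simp [hs_def]
    | m + 1 =>
      rw [hνn (m+1), hKlaw (m+1) (by omega)]
      rw [ENNReal.toReal_ofReal (by
        exact add_nonneg (mul_nonneg (pow_nonneg hu0.le _) h1u)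
          (mul_nonneg (pow_nonneg h1u _) hu0.le))]
      rw [hf (m+1) (by omega), hs_def]
      simp only [smul_eq_mul]
  show ∑' n : ℕ, ((μ.map K) {n}).toReal • f n = L
  rw [hcongr]
  exact hsSum.tsum_eq
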